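/- arXiv:1909.06823 — 6 statements merged into one kernel-verified Lean document; each statement's English description precedes it below -/
import Mathlib

section
/- Let G be a finite graph on vertex set V over a field F. If there is a matrix A ∈ F^{V×V} of rank r representing the complement of G (i.e., A_{u,u} ≠ 0 for all u, and A_{u,v} = 0 whenever u ≠ v and uv is an edge of G), then there exists an independent representation of G over F^r. -/
/-!
The columns of `A` already form an independent representation in `F^V`: the `v`-th coordinate
functional is nonzero on column `v` and vanishes on the columns of the neighbours of `v`.
These columns span a space of dimension `rank A = r`, and a linear isomorphism of that span
with `F^r` transports the representation.
-/

open Matrix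

namespace SimpleGraph

def IsIndependentRepresentation {V : Type*} (K : Type*) {M : Type*} [Semiring K]
    [AddCommMonoid M] [Module K M] (G : SimpleGraph V) (x : V → M) : Prop :=
  ∀ v, x v ∉ Submodule.span K (x '' G.neighborSet v)

namespace IsIndependentRepresentation

section Semiring

variable {V K M N : Type*} [Semiring K] [AddCommMonoid M] [Module K M] [AddCommMonoid N]
  [Module K N] {G : SimpleGraph V}

theorem of_comp {x : V → M} (f : M →ₗ[K] N) (h : G.IsIndependentRepresentation K (f ∘ x)) :
    G.IsIndependentRepresentation K x := by
  intro v hv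
  apply h v
  rw [Function.comp_apply, Set.image_comp]
  exact Submodule.apply_mem_span_image_of_mem_span f hv

theorem of_separating_dual {x : V → M} (φ : V → M →ₗ[K] K) (hself : ∀ v, φ v (x v) ≠ 0)
    (hnbr : ∀ v u, G.Adj v u → φ v (x u) = 0) : G.IsIndependentRepresentation K x := by
  intro v hv
  have hle : Submodule.span K (x '' G.neighborSet v) ≤ LinearMap.ker (φ v) := by
    rw [Submodule.span_le]
    rintro _ ⟨u, hu, rfl⟩
    exact hnbr v u hu
  exact hself v (hle hv)

end Semiring

theorem exists_fin_of_finrank_span {V K M : Type*} [Finite V] [DivisionRing K] [AddCommGroup M]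
    [Module K M] {G : SimpleGraph V} {x : V → M} (hx : G.IsIndependentRepresentation K x)
    {r : ℕ} (hr : Module.finrank K (Submodule.span K (Set.range x)) = r) :
    ∃ y : V → (Fin r → K), G.IsIndependentRepresentation K y := by
  set W := Submodule.span K (Set.range x)
  have : FiniteDimensional K W := FiniteDimensional.span_of_finite K (Set.finite_range x)
  let e : W ≃ₗ[K] (Fin r → K) := (Module.finBasisOfFinrankEq K W hr).equivFun
  let xW : V → W := fun v => ⟨x v, Submodule.subset_span (Set.mem_range_self v)⟩
  refine ⟨e ∘ xW, of_comp (W.subtype ∘ₗ e.symm.toLinearMap) ?_⟩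
  convert hx using 1
  ext v
  simp [xW]

end IsIndependentRepresentation

theorem isIndependentRepresentation_cols {V K : Type*} [Semiring K] (G : SimpleGraph V)
    (A : Matrix V V K) (hdiag : ∀ u, A u u ≠ 0) (hedge : ∀ u v, G.Adj u v → A u v = 0) :
    G.IsIndependentRepresentation K Aᵀ :=
  .of_separating_dual (fun v => LinearMap.proj v) hdiag hedge

end SimpleGraph

theorem indep_rep_of_matrix_general {V : Type*} [Fintype V] (G : SimpleGraph V)
    (F : Type*) [Field F] (A : Matrix V V F) (r : ℕ) (hrk : A.rank = r)
    (hdiag : ∀ u, A u u ≠ 0)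
    (hedge : ∀ u v, G.Adj u v → A u v = 0) :
    ∃ x : V → (Fin r → F),
      ∀ v, x v ∉ Submodule.span F (x '' (G.neighborSet v)) :=
  SimpleGraph.IsIndependentRepresentation.exists_fin_of_finrank_span
    (G.isIndependentRepresentation_cols A hdiag hedge)
    (by rw [← hrk, Matrix.rank_eq_finrank_span_cols]; rfl)

/-- If a matrix `A` of rank `r` represents the complement of a finite graph `G`
over a field `F` (nonzero diagonal, and `A u v = 0` for every edge `uv` of `G`), then `G` has
an independent representation over `F^r`. -/
theorem indep_rep_of_matrix {V : Type*} [Fintype V] [DecidableEq V] (G : SimpleGraph V)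
    (F : Type*) [Field F] (A : Matrix V V F) (r : ℕ) (hrk : A.rank = r)
    (hdiag : ∀ u, A u u ≠ 0)
    (hedge : ∀ u v, G.Adj u v → A u v = 0) :
    ∃ x : V → (Fin r → F),
      ∀ v, x v ∉ Submodule.span F (x '' (G.neighborSet v)) :=
  indep_rep_of_matrix_general G F A r hrk hdiag hedge
end

section
/- Let G be a finite graph on vertex set V over a field F. If G admits an independent representation over F^s, then there exists a V×V matrix over F of rank at most s that represents the complement of G (i.e., has nonzero diagonal entries and zero entries A_{u,v} for every edge uv of G with u ≠ v). -/
/-!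
Choose for each vertex `u` a functional `f u` that is nonzero at `x u` and vanishes on the span
of the neighbours' vectors. The matrix `A u v = f u (x v)` then has nonzero diagonal and vanishes
on edges, and it factors through `F^s`, so its rank is at most `s`.
-/

theorem Matrix.rank_of_dual_apply_le {m n ι R : Type*} [Fintype n] [Fintype ι] [CommRing R]
    [StrongRankCondition R] (f : m → Module.Dual R (ι → R)) (x : n → ι → R) :
    (Matrix.of fun u v => f u (x v)).rank ≤ Fintype.card ι := by
  classical
  have hfactor : Matrix.of (fun u v => f u (x v)) =
      LinearMap.toMatrix' (LinearMap.pi f) * (Matrix.of x).transpose := by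
    ext u v
    rw [Matrix.of_apply, pi_eq_sum_univ' (x v), map_sum]
    simp only [Matrix.mul_apply, LinearMap.toMatrix'_apply, LinearMap.pi_apply, map_smul,
      smul_eq_mul, Matrix.transpose_apply, Matrix.of_apply, mul_comm]
  rw [hfactor]
  exact (Matrix.rank_mul_le_right _ _).trans (Matrix.rank_le_card_height _)

theorem matrix_of_indep_rep_general {V : Type*} [Fintype V] (G : SimpleGraph V)
    (F : Type*) [Field F] (s : ℕ) (x : V → (Fin s → F))
    (hind : ∀ v, x v ∉ Submodule.span F (x '' (G.neighborSet v))) :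
    ∃ A : Matrix V V F, A.rank ≤ s ∧ (∀ u, A u u ≠ 0) ∧
      ∀ u v, G.Adj u v → A u v = 0 := by
  choose f hf_self hf_ker using fun u => Submodule.exists_le_ker_of_notMem (hind u)
  refine ⟨Matrix.of fun u v => f u (x v), ?_, hf_self, fun u v huv => ?_⟩
  · simpa using Matrix.rank_of_dual_apply_le f x
  · exact hf_ker u (Submodule.subset_span ⟨v, huv, rfl⟩)

/-- If a finite graph `G` admits an independent representation over `F^s`, then
there is a `V × V` matrix over `F` of rank at most `s` representing the complement of `G`
(nonzero diagonal, and zero entries on edges of `G`). -/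
theorem matrix_of_indep_rep {V : Type*} [Fintype V] [DecidableEq V] (G : SimpleGraph V)
    (F : Type*) [Field F] (s : ℕ) (x : V → (Fin s → F))
    (hind : ∀ v, x v ∉ Submodule.span F (x '' (G.neighborSet v))) :
    ∃ A : Matrix V V F, A.rank ≤ s ∧ (∀ u, A u u ≠ 0) ∧
      ∀ u v, G.Adj u v → A u v = 0 :=
  matrix_of_indep_rep_general G F s x hind
end

section
/- The minimum s for which there exists an independent representation of a finite graph G over F^s equals the minrank of the complement of G over F. -/
open Matrix Submodule

section Aux
variable {V : Type*} [Fintype V] [DecidableEq V] (G : SimpleGraph V) (F : Type*) [Field F]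

/-- Lemma A: a matrix representing the complement gives an independent representation. -/
lemma matrix_to_rep (A : Matrix V V F) (hd : ∀ u, A u u ≠ 0)
    (hz : ∀ u v, G.Adj u v → A u v = 0) :
    ∃ x : V → (Fin A.rank → F),
      ∀ v, x v ∉ Submodule.span F (x '' (G.neighborSet v)) := by
  classical
  set W := LinearMap.range A.mulVecLin with hW
  have hfin : FiniteDimensional F W := by infer_instance
  have hrank : Module.finrank F W = A.rank := rfl
  -- columns of A
  set col : V → (V → F) := fun v => A.mulVec (Pi.single v 1) with hcol
  have hcolval : ∀ u v, col v u = A u v := by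
    intro u v
    simp [hcol, Matrix.mulVec_single]
  have hmem : ∀ v, col v ∈ W := fun v => ⟨Pi.single v 1, rfl⟩
  set c : V → W := fun v => ⟨col v, hmem v⟩ with hc
  have hb : Module.finrank F (Fin A.rank → F) = A.rank := by
    simp
  let e : W ≃ₗ[F] (Fin A.rank → F) :=
    LinearEquiv.ofFinrankEq W (Fin A.rank → F) (hrank.trans hb.symm)
  refine ⟨fun v => e (c v), fun v hv => ?_⟩
  -- pull back membership through e
  have himg : (fun v => e (c v)) '' G.neighborSet v = e '' (c '' G.neighborSet v) := by
    rw [Set.image_image]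
  rw [himg] at hv
  have h1 : c v ∈ Submodule.span F (c '' G.neighborSet v) := by
    rw [show (⇑e '' (c '' G.neighborSet v)) = (⇑e.toLinearMap '' (c '' G.neighborSet v)) from rfl,
      ← Submodule.map_span] at hv
    obtain ⟨y, hy, hey⟩ := hv
    have : y = c v := e.injective hey
    rwa [this] at hy
  -- push to ambient space via subtype
  have h2 : col v ∈ Submodule.span F (col '' G.neighborSet v) := by
    have := Submodule.mem_map_of_mem (f := W.subtype) h1
    rw [Submodule.map_span] at this
    have himg2 : W.subtype '' (c '' G.neighborSet v) = col '' G.neighborSet v := by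
      rw [Set.image_image]; rfl
    rwa [himg2] at this
  -- evaluation at v kills all generators
  have hle : Submodule.span F (col '' G.neighborSet v) ≤
      LinearMap.ker (LinearMap.proj (R := F) (φ := fun _ : V => F) v) := by
    rw [Submodule.span_le]
    rintro _ ⟨u, hu, rfl⟩
    simp only [SetLike.mem_coe, LinearMap.mem_ker, LinearMap.proj_apply]
    rw [hcolval]
    exact hz v u hu
  have := hle h2
  simp only [LinearMap.mem_ker, LinearMap.proj_apply] at this
  rw [hcolval] at this
  exact hd v this

/-- Lemma B: an independent representation gives a matrix of small rank. -/
lemma rep_to_matrix (s : ℕ) (x : V → (Fin s → F))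
    (hx : ∀ v, x v ∉ Submodule.span F (x '' (G.neighborSet v))) :
    ∃ A : Matrix V V F, (∀ u, A u u ≠ 0) ∧
      (∀ u v, G.Adj u v → A u v = 0) ∧ A.rank ≤ s := by
  classical
  -- for each u, a functional vanishing on the span of neighbors but not at x u
  have key : ∀ u : V, ∃ φ : (Fin s → F) →ₗ[F] F,
      (∀ w ∈ Submodule.span F (x '' (G.neighborSet u)), φ w = 0) ∧ φ (x u) ≠ 0 := by
    intro u
    set W := Submodule.span F (x '' (G.neighborSet u)) with hWdef
    set Q := (Fin s → F) ⧸ W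
    have hq : W.mkQ (x u) ≠ 0 := by
      rw [Submodule.mkQ_apply, ne_eq, Submodule.Quotient.mk_eq_zero]
      exact hx u
    have : FiniteDimensional F Q := by infer_instance
    obtain ⟨ψ, hψ⟩ : ∃ ψ : Q →ₗ[F] F, ψ (W.mkQ (x u)) ≠ 0 := by
      let b := Module.finBasis F Q
      have : b.repr (W.mkQ (x u)) ≠ 0 := b.repr.map_ne_zero_iff.mpr hq
      obtain ⟨i, hi⟩ := Finsupp.ne_iff.mp this
      exact ⟨b.coord i, by simpa [Module.Basis.coord_apply] using hi⟩
    refine ⟨ψ.comp W.mkQ, fun w hw => ?_, hψ⟩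
    have : W.mkQ w = 0 := by
      rw [Submodule.mkQ_apply, Submodule.Quotient.mk_eq_zero]; exact hw
    simp [LinearMap.comp_apply, this]
  choose φ hφ0 hφne using key
  refine ⟨Matrix.of (fun u v => φ u (x v)), fun u => hφne u, fun u v huv => ?_, ?_⟩
  · exact hφ0 u (x v) (Submodule.subset_span ⟨v, huv, rfl⟩)
  · -- factor: A = B * C with C of height s
    set B : Matrix V (Fin s) F := Matrix.of (fun u i => φ u ((Pi.single i 1 : Fin s → F)))
    set C : Matrix (Fin s) V F := Matrix.of (fun i v => x v i)
    have hfac : Matrix.of (fun u v => φ u (x v)) = B * C := by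
      ext u v
      have : x v = ∑ i : Fin s, x v i • (Pi.single i 1 : Fin s → F) := by
        ext j; simp [Pi.single_apply, mul_comm]
      rw [Matrix.mul_apply]
      simp only [Matrix.of_apply, B, C]
      conv_lhs => rw [this]
      rw [map_sum]
      simp [mul_comm]
    rw [hfac]
    calc (B * C).rank ≤ C.rank := Matrix.rank_mul_le_right B C
      _ ≤ Fintype.card (Fin s) := Matrix.rank_le_card_height C
      _ = s := Fintype.card_fin s

end Aux

theorem indep_rep_min_eq_minrank_compl {V : Type*} [Fintype V] [DecidableEq V]
    (G : SimpleGraph V) (F : Type*) [Field F] :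
    sInf {s : ℕ | ∃ x : V → (Fin s → F),
        ∀ v, x v ∉ Submodule.span F (x '' (G.neighborSet v))}
      = sInf {r : ℕ | ∃ A : Matrix V V F, (∀ u, A u u ≠ 0) ∧
          (∀ u v, G.Adj u v → A u v = 0) ∧ A.rank = r} := by
  classical
  set S1 := {s : ℕ | ∃ x : V → (Fin s → F),
      ∀ v, x v ∉ Submodule.span F (x '' (G.neighborSet v))}
  set S2 := {r : ℕ | ∃ A : Matrix V V F, (∀ u, A u u ≠ 0) ∧
      (∀ u v, G.Adj u v → A u v = 0) ∧ A.rank = r}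
  have h2ne : S2.Nonempty := by
    refine ⟨(1 : Matrix V V F).rank, 1, fun u => by simp, fun u v huv => ?_, rfl⟩
    exact Matrix.one_apply_ne huv.ne
  have h1ne : S1.Nonempty := by
    obtain ⟨r, A, hd, hz, hr⟩ := h2ne
    obtain ⟨x, hx⟩ := matrix_to_rep G F A hd hz
    exact ⟨A.rank, x, hx⟩
  apply le_antisymm
  · -- sInf S1 ≤ sInf S2
    obtain ⟨A, hd, hz, hr⟩ := Nat.sInf_mem h2ne
    obtain ⟨x, hx⟩ := matrix_to_rep G F A hd hz
    rw [← hr]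
    exact Nat.sInf_le ⟨x, hx⟩
  · obtain ⟨x, hx⟩ := Nat.sInf_mem h1ne
    obtain ⟨A, hd, hz, hrank⟩ := rep_to_matrix G F _ x hx
    exact le_trans (Nat.sInf_le ⟨A, hd, hz, rfl⟩) hrank
end

section
/- Let P be a nonempty finite free Z_2-poset, i.e., a poset with an order-preserving involution ν having no fixed points such that p and ν(p) are never comparable. Let r = Xind(P) + 1, where Xind(P) is the minimum n such that there exists an order-preserving Z_2-map from P to Q_n. Suppose φ : P → ℤ \ {0} satisfies: (1) if φ(p) = −φ(q) then p and q are incomparable; (2) |φ(p)| ≤ |φ(q)| whenever p ≤ q; (3) φ(ν(p)) = −φ(p) for all p. Then there exists a chain p_1 < p_2 < ⋯ < p_r in P such that 0 < −φ(p_1) < +φ(p_2) < −φ(p_3) < ⋯ < (−1)^r φ(p_r). -/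
/-- The underlying set of the free `Z₂`-poset `Q n`: the elements `±1, …, ±(n+1)`,
encoded as nonzero integers of absolute value at most `n + 1`. -/
def QElem (n : ℕ) : Type := {i : ℤ // i ≠ 0 ∧ |i| ≤ n + 1}

/-- The partial order of `Q n`: `p < q` iff `|p| < |q|`. -/
instance (n : ℕ) : PartialOrder (QElem n) where
  le p q := p = q ∨ |p.1| < |q.1|
  le_refl p := Or.inl rfl
  le_trans p q r h1 h2 := by
    rcases h1 with rfl | h1
    · exact h2
    · rcases h2 with rfl | h2
      · exact Or.inr h1
      · exact Or.inr (h1.trans h2)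
  le_antisymm p q h1 h2 := by
    rcases h1 with rfl | h1
    · rfl
    · rcases h2 with rfl | h2
      · rfl
      · exact absurd (h1.trans h2) (lt_irrefl _)

/-- The involution `i ↦ -i` of `Q n`. -/
def QNeg (n : ℕ) : QElem n → QElem n :=
  fun p => ⟨-p.1, neg_ne_zero.mpr p.2.1, by rw [abs_neg]; exact p.2.2⟩

/-- An order-preserving `Z₂`-map between two posets equipped with involutions. -/
def IsZ2Map {P Q : Type*} [PartialOrder P] [PartialOrder Q] (νP : P → P) (νQ : Q → Q)
    (f : P → Q) : Prop :=
  Monotone f ∧ ∀ p, f (νP p) = νQ (f p)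

open Classical in
/-- The cross-index of a free `Z₂`-poset `(P, ν)` : the minimum `n` such that there is an
order-preserving `Z₂`-map from `P` to `Q n`, with the convention `-1` for the empty poset. -/
noncomputable def XindZ (P : Type*) [PartialOrder P] (νP : P → P) : ℤ :=
  if Nonempty P then ((sInf {n : ℕ | ∃ f : P → QElem n, IsZ2Map νP (QNeg n) f} : ℕ) : ℤ)
  else -1

/- ### Auxiliary machinery for the fan lemma -/

/-- Sign step lemma. -/
lemma signStep {s a b : ℤ} (h : 0 < s * a) (h2 : b * a < 0) : 0 < -s * b := by
  rcases lt_trichotomy a 0 with ha | ha | ha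
  · have hs : s < 0 := by nlinarith
    have hb : 0 < b := by nlinarith
    nlinarith
  · simp [ha] at h
  · have hs : 0 < s := by nlinarith
    have hb : b < 0 := by nlinarith
    nlinarith

/-- The set of lengths (minus one) of sign-alternating chains ending at `p`. -/
def AltSet {P : Type*} [PartialOrder P] (φ : P → ℤ) (p : P) : Set ℕ :=
  {k | ∃ c : Fin (k + 1) → P, (∀ i : Fin k, c i.castSucc < c i.succ) ∧
      (∀ i : Fin k, φ (c i.succ) * φ (c i.castSucc) < 0) ∧ c (Fin.last k) = p}

noncomputable def altL {P : Type*} [PartialOrder P] (φ : P → ℤ) (p : P) : ℕ :=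
  sSup (AltSet φ p)

section AltFacts

variable {P : Type*} [PartialOrder P] [Fintype P] (φ : P → ℤ) (p : P)

lemma zero_mem_AltSet : 0 ∈ AltSet φ p :=
  ⟨fun _ => p, fun i => i.elim0, fun i => i.elim0, rfl⟩

lemma AltSet_le_card {k : ℕ} (hk : k ∈ AltSet φ p) : k + 1 ≤ Fintype.card P := by
  obtain ⟨c, hc, -, -⟩ := hk
  have hsm : StrictMono c := Fin.strictMono_iff_lt_succ.2 hc
  simpa using Fintype.card_le_of_injective c hsm.injective

lemma AltSet_bddAbove : BddAbove (AltSet φ p) :=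
  ⟨Fintype.card P, fun k hk => by have := AltSet_le_card φ p hk; omega⟩

lemma altL_mem : altL φ p ∈ AltSet φ p :=
  Nat.sSup_mem ⟨0, zero_mem_AltSet φ p⟩ (AltSet_bddAbove φ p)

lemma le_altL {k : ℕ} (hk : k ∈ AltSet φ p) : k ≤ altL φ p :=
  le_csSup (AltSet_bddAbove φ p) hk

/-- Transport of alternating chains along the involution. -/
lemma AltSet_nu_mono (ν : P → P) (hinv : Function.Involutive ν) (hmono : Monotone ν)
    (h3 : ∀ q, φ (ν q) = -φ q) {k : ℕ} (hk : k ∈ AltSet φ p) : k ∈ AltSet φ (ν p) := by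
  obtain ⟨c, hc, halt, hlast⟩ := hk
  have hνs : ∀ a b : P, a < b → ν a < ν b := fun a b hab =>
    lt_of_le_of_ne (hmono hab.le) (fun he => hab.ne (hinv.injective he))
  exact ⟨ν ∘ c, fun i => hνs _ _ (hc i),
    fun i => by simpa [h3] using halt i, by simp [hlast]⟩

lemma altL_nu (ν : P → P) (hinv : Function.Involutive ν) (hmono : Monotone ν)
    (h3 : ∀ q, φ (ν q) = -φ q) : altL φ (ν p) = altL φ p := by
  apply le_antisymm
  · have h := AltSet_nu_mono φ (ν p) ν hinv hmono h3 (altL_mem φ (ν p))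
    rw [hinv p] at h
    exact le_altL φ p h
  · exact le_altL φ (ν p) (AltSet_nu_mono φ p ν hinv hmono h3 (altL_mem φ p))

/-- Extension: if `p < q` with opposite signs, the length jumps. -/
lemma altL_succ_le {q : P} (hpq : p < q) (hsign : φ q * φ p < 0) :
    altL φ p + 1 ≤ altL φ q := by
  classical
  obtain ⟨c, hc, halt, hlast⟩ := altL_mem φ p
  have hc2 : ∀ (v : ℕ) (hv : v < altL φ p), c ⟨v, by omega⟩ < c ⟨v + 1, by omega⟩ :=
    fun v hv => hc ⟨v, hv⟩
  have halt2 : ∀ (v : ℕ) (hv : v < altL φ p),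
      φ (c ⟨v + 1, by omega⟩) * φ (c ⟨v, by omega⟩) < 0 := fun v hv => halt ⟨v, hv⟩
  have hlast2 : c ⟨altL φ p, by omega⟩ = p := hlast
  apply le_altL
  refine ⟨fun j => if h : j.val < altL φ p + 1 then c ⟨j.val, h⟩ else q, ?_, ?_, by simp⟩
  · intro i
    simp only [Fin.coe_castSucc, Fin.val_succ]
    rcases lt_or_eq_of_le (Nat.lt_succ_iff.mp i.isLt) with hi | hi
    · rw [dif_pos (show (i.val : ℕ) < altL φ p + 1 by omega),
        dif_pos (show i.val + 1 < altL φ p + 1 by omega)]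
      exact hc2 i.val hi
    · rw [dif_pos (show (i.val : ℕ) < altL φ p + 1 by omega),
        dif_neg (show ¬ i.val + 1 < altL φ p + 1 by omega)]
      have hcp : c ⟨i.val, by omega⟩ = p := by
        rw [show (⟨i.val, by omega⟩ : Fin (altL φ p + 1)) = ⟨altL φ p, by omega⟩ from
          Fin.ext hi]
        exact hlast2
      rw [hcp]; exact hpq
  · intro i
    simp only [Fin.coe_castSucc, Fin.val_succ]
    rcases lt_or_eq_of_le (Nat.lt_succ_iff.mp i.isLt) with hi | hi
    · rw [dif_pos (show i.val + 1 < altL φ p + 1 by omega),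
        dif_pos (show (i.val : ℕ) < altL φ p + 1 by omega)]
      exact halt2 i.val hi
    · rw [dif_neg (show ¬ i.val + 1 < altL φ p + 1 by omega),
        dif_pos (show (i.val : ℕ) < altL φ p + 1 by omega)]
      have hcp : c ⟨i.val, by omega⟩ = p := by
        rw [show (⟨i.val, by omega⟩ : Fin (altL φ p + 1)) = ⟨altL φ p, by omega⟩ from
          Fin.ext hi]
        exact hlast2
      rw [hcp]; exact hsign

/-- Replacement: if `p ≤ q` with the same sign, the length does not drop. -/
lemma altL_le_of_same_sign {q : P} (hpq : p ≤ q) (hsign : 0 < φ q * φ p) :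
    altL φ p ≤ altL φ q := by
  classical
  rcases eq_or_lt_of_le hpq with rfl | hpq'
  · exact le_refl _
  obtain ⟨c, hc, halt, hlast⟩ := altL_mem φ p
  have hc2 : ∀ (v : ℕ) (hv : v < altL φ p), c ⟨v, by omega⟩ < c ⟨v + 1, by omega⟩ :=
    fun v hv => hc ⟨v, hv⟩
  have halt2 : ∀ (v : ℕ) (hv : v < altL φ p),
      φ (c ⟨v + 1, by omega⟩) * φ (c ⟨v, by omega⟩) < 0 := fun v hv => halt ⟨v, hv⟩
  have hlast2 : c ⟨altL φ p, by omega⟩ = p := hlast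
  apply le_altL
  refine ⟨fun j => if h : j.val < altL φ p then c ⟨j.val, by omega⟩ else q, ?_, ?_, by simp⟩
  · intro i
    simp only [Fin.coe_castSucc, Fin.val_succ]
    rcases lt_or_eq_of_le (Nat.succ_le_of_lt i.isLt) with hi | hi
    · rw [dif_pos (show (i.val : ℕ) < altL φ p by omega),
        dif_pos (show i.val + 1 < altL φ p by omega)]
      exact hc2 i.val (by omega)
    · rw [dif_pos (show (i.val : ℕ) < altL φ p by omega),
        dif_neg (show ¬ i.val + 1 < altL φ p by omega)]
      have hstep := hc2 i.val (by omega)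
      have hcp : c ⟨i.val + 1, by omega⟩ = p := by
        rw [show (⟨i.val + 1, by omega⟩ : Fin (altL φ p + 1)) = ⟨altL φ p, by omega⟩ from
          Fin.ext hi]
        exact hlast2
      rw [hcp] at hstep
      exact hstep.trans_le hpq
  · intro i
    simp only [Fin.coe_castSucc, Fin.val_succ]
    rcases lt_or_eq_of_le (Nat.succ_le_of_lt i.isLt) with hi | hi
    · rw [dif_pos (show i.val + 1 < altL φ p by omega),
        dif_pos (show (i.val : ℕ) < altL φ p by omega)]
      exact halt2 i.val (by omega)
    · rw [dif_neg (show ¬ i.val + 1 < altL φ p by omega),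
        dif_pos (show (i.val : ℕ) < altL φ p by omega)]
      have hstep := halt2 i.val (by omega)
      have hcp : c ⟨i.val + 1, by omega⟩ = p := by
        rw [show (⟨i.val + 1, by omega⟩ : Fin (altL φ p + 1)) = ⟨altL φ p, by omega⟩ from
          Fin.ext hi]
        exact hlast2
      rw [hcp] at hstep
      rw [mul_comm] at hstep
      have := signStep hsign hstep
      nlinarith

end AltFacts

set_option maxHeartbeats 2000000 in
/-- Fan lemma for the cross-index: Let `P` be a nonempty finite free
`Z₂`-poset with involution `ν`, and `r = Xind(P) + 1`. If `φ : P → ℤ \ {0}` satisfies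
(1) `φ p = -φ q` implies `p` and `q` are incomparable, (2) `|φ p| ≤ |φ q|` whenever `p ≤ q`,
and (3) `φ (ν p) = -φ p`, then there is a chain `p 0 < p 1 < ⋯ < p (r-1)` with
`0 < -φ (p 0) < φ (p 1) < -φ (p 2) < ⋯ < (-1)^r φ (p (r-1))`. -/
theorem fan_lemma_cross_index {P : Type*} [PartialOrder P] [Fintype P] [Nonempty P]
    (ν : P → P) (hinv : Function.Involutive ν) (hmono : Monotone ν)
    (hfree : ∀ p, ν p ≠ p) (hincomp : ∀ p, ¬ p ≤ ν p ∧ ¬ ν p ≤ p)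
    (r : ℕ) (hr : (r : ℤ) = XindZ P ν + 1)
    (φ : P → ℤ) (hφ0 : ∀ p, φ p ≠ 0)
    (h1 : ∀ p q, φ p = -φ q → ¬ p ≤ q ∧ ¬ q ≤ p)
    (h2 : ∀ p q, p ≤ q → |φ p| ≤ |φ q|)
    (h3 : ∀ p, φ (ν p) = -φ p) :
    ∃ p : Fin r → P, StrictMono p ∧
      (∀ i : Fin r, 0 < (-1 : ℤ) ^ (i.val + 1) * φ (p i)) ∧
      StrictMono (fun i : Fin r => (-1 : ℤ) ^ (i.val + 1) * φ (p i)) := by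
  classical
  have hνs : ∀ a b : P, a < b → ν a < ν b := fun a b hab =>
    lt_of_le_of_ne (hmono hab.le) (fun he => hab.ne (hinv.injective he))
  obtain ⟨p₀, hp₀⟩ := Finite.exists_max (altL φ)
  set N := altL φ p₀ with hN
  -- the candidate Z₂-map into `Q N`
  have hval_ne : ∀ x : P, ((if 0 < φ x then (1 : ℤ) else -1) * (altL φ x + 1)) ≠ 0 := by
    intro x
    rcases lt_or_ge 0 (φ x) with h | h
    · simp only [if_pos h, one_mul]
      positivity
    · simp only [if_neg (not_lt.2 h), neg_one_mul, ne_eq, neg_eq_zero]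
      positivity
  have hval_abs : ∀ x : P, |((if 0 < φ x then (1 : ℤ) else -1) * (altL φ x + 1))| =
      (altL φ x : ℤ) + 1 := by
    intro x
    rcases lt_or_ge 0 (φ x) with h | h
    · simp only [if_pos h, one_mul]
      exact abs_of_pos (by positivity)
    · simp only [if_neg (not_lt.2 h), neg_one_mul, abs_neg]
      exact abs_of_pos (by positivity)
  set f : P → QElem N := fun x =>
    ⟨(if 0 < φ x then (1 : ℤ) else -1) * (altL φ x + 1), hval_ne x, by
      rw [hval_abs x]
      have := hp₀ x
      push_cast
      omega⟩ with hf_def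
  have hfval : ∀ x : P, (f x).1 = (if 0 < φ x then (1 : ℤ) else -1) * (altL φ x + 1) :=
    fun x => rfl
  have hfabs : ∀ x : P, |(f x).1| = (altL φ x : ℤ) + 1 := fun x => hval_abs x
  have hsign_ne : ∀ x y : P, φ x * φ y < 0 →
      (if 0 < φ x then (1 : ℤ) else -1) = -(if 0 < φ y then (1 : ℤ) else -1) := by
    intro x y hxy
    rcases lt_trichotomy (φ x) 0 with h | h | h
    · have hy : 0 < φ y := by nlinarith
      simp [h, not_lt.2 h.le, hy]
    · exact absurd h (hφ0 x)
    · have hy : φ y < 0 := by nlinarith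
      simp [h, not_lt.2 hy.le]
  have hsign_eq : ∀ x y : P, 0 < φ x * φ y →
      (if 0 < φ x then (1 : ℤ) else -1) = (if 0 < φ y then (1 : ℤ) else -1) := by
    intro x y hxy
    rcases lt_trichotomy (φ x) 0 with h | h | h
    · have hy : φ y < 0 := by nlinarith
      simp [not_lt.2 h.le, not_lt.2 hy.le]
    · exact absurd h (hφ0 x)
    · have hy : 0 < φ y := by nlinarith
      simp [h, hy]
  have hf : IsZ2Map ν (QNeg N) f := by
    constructor
    · intro x y hxy
      rcases eq_or_lt_of_le hxy with rfl | hlt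
      · exact le_refl _
      rcases lt_trichotomy (φ y * φ x) 0 with hs | hs | hs
      · -- opposite signs: length strictly increases
        have hL := altL_succ_le φ x hlt hs
        refine Or.inr ?_
        rw [hfabs, hfabs]
        have := hp₀ y
        push_cast
        omega
      · exact absurd hs (mul_ne_zero (hφ0 y) (hφ0 x))
      · -- same sign
        have hL := altL_le_of_same_sign φ x hxy hs
        rcases eq_or_lt_of_le hL with hLe | hLl
        · refine Or.inl ?_
          apply Subtype.ext
          rw [hfval, hfval, ← hLe, hsign_eq x y (by rw [mul_comm]; exact hs)]
        · refine Or.inr ?_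
          rw [hfabs, hfabs]
          push_cast
          omega
    · intro x
      apply Subtype.ext
      show (f (ν x)).1 = -(f x).1
      rw [hfval, hfval, altL_nu φ x ν hinv hmono h3]
      have : (if 0 < φ (ν x) then (1 : ℤ) else -1) = -(if 0 < φ x then (1 : ℤ) else -1) := by
        apply hsign_ne
        rw [h3]
        rcases (hφ0 x).lt_or_gt with h | h <;> nlinarith
      rw [this]; ring
  -- r ≤ N + 1
  have hXind : XindZ P ν =
      ((sInf {n : ℕ | ∃ g : P → QElem n, IsZ2Map ν (QNeg n) g} : ℕ) : ℤ) := by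
    unfold XindZ
    rw [if_pos ‹Nonempty P›]
  rw [hXind] at hr
  have hinfle : sInf {n : ℕ | ∃ g : P → QElem n, IsZ2Map ν (QNeg n) g} ≤ N :=
    Nat.sInf_le ⟨f, hf⟩
  have hrn : r = sInf {n : ℕ | ∃ g : P → QElem n, IsZ2Map ν (QNeg n) g} + 1 := by
    exact_mod_cast hr
  have hrN : r ≤ N + 1 := by omega
  -- extract an alternating chain of length N + 1 and normalize its first sign
  obtain ⟨c, hc, halt, -⟩ := altL_mem φ p₀
  obtain ⟨c', hc', halt', hneg⟩ : ∃ c' : Fin (N + 1) → P,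
      (∀ i : Fin N, c' i.castSucc < c' i.succ) ∧
      (∀ i : Fin N, φ (c' i.succ) * φ (c' i.castSucc) < 0) ∧
      φ (c' ⟨0, Nat.succ_pos N⟩) < 0 := by
    by_cases hs : φ (c ⟨0, Nat.succ_pos N⟩) < 0
    · exact ⟨c, hc, halt, hs⟩
    · refine ⟨ν ∘ c, fun i => hνs _ _ (hc i),
        fun i => by simpa [Function.comp, h3] using halt i, ?_⟩
      simp only [Function.comp, h3]
      have := hφ0 (c ⟨0, Nat.succ_pos N⟩)
      omega
  have hcsm : StrictMono c' := Fin.strictMono_iff_lt_succ.2 hc'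
  -- alternating positivity along the chain
  have key : ∀ i : ℕ, ∀ h : i < N + 1, 0 < (-1 : ℤ) ^ (i + 1) * φ (c' ⟨i, h⟩) := by
    intro i
    induction i with
    | zero => intro h; simpa using hneg
    | succ n ih =>
      intro h
      have hn : n < N + 1 := by omega
      have h1 := ih hn
      have h2 : φ (c' ⟨n + 1, h⟩) * φ (c' ⟨n, hn⟩) < 0 := halt' ⟨n, by omega⟩
      have heq : (-1 : ℤ) ^ (n + 1 + 1) * φ (c' ⟨n + 1, h⟩) =
          -(-1 : ℤ) ^ (n + 1) * φ (c' ⟨n + 1, h⟩) := by ring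
      rw [heq]
      exact signStep h1 h2
  -- adjacent strict increase of |φ|
  have hadj : ∀ x y : P, x < y → φ y * φ x < 0 → |φ x| < |φ y| := by
    intro x y hxy hs
    rcases lt_or_eq_of_le (h2 x y hxy.le) with h | h
    · exact h
    · rcases abs_eq_abs.mp h with he | he
      · rw [he] at hs
        linarith [mul_self_nonneg (φ y)]
      · exact absurd hxy.le (h1 x y (by linarith)).1
  -- the final chain
  refine ⟨fun i => c' ⟨i.val, by omega⟩, ?_, ?_, ?_⟩
  · intro a b hab
    exact hcsm (show (⟨a.val, by omega⟩ : Fin (N + 1)) < ⟨b.val, by omega⟩ from hab)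
  · intro i
    exact key i.val (by omega)
  · have habs : ∀ i : Fin r, (-1 : ℤ) ^ (i.val + 1) * φ (c' ⟨i.val, by omega⟩) =
        |φ (c' ⟨i.val, by omega⟩)| := by
      intro i
      have hpos := key i.val (show i.val < N + 1 by omega)
      have : |(-1 : ℤ) ^ (i.val + 1) * φ (c' ⟨i.val, by omega⟩)| =
          |φ (c' ⟨i.val, by omega⟩)| := by
        rw [abs_mul, abs_pow, abs_neg, abs_one, one_pow, one_mul]
      rw [← this, abs_of_pos hpos]
    intro a b hab
    simp only []
    rw [habs a, habs b]
    have hab' : a.val + 1 ≤ b.val := hab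
    have h1lt : |φ (c' ⟨a.val, by omega⟩)| < |φ (c' ⟨a.val + 1, by omega⟩)| := by
      apply hadj
      · exact hcsm (show (⟨a.val, by omega⟩ : Fin (N + 1)) < ⟨a.val + 1, by omega⟩ by
          simp [Fin.lt_def])
      · exact halt' ⟨a.val, by omega⟩
    have h2le : |φ (c' ⟨a.val + 1, by omega⟩)| ≤ |φ (c' ⟨b.val, by omega⟩)| := by
      apply h2
      rcases eq_or_lt_of_le hab' with he | hl
      · exact le_of_eq (congrArg c' (Fin.ext he))
      · exact (hcsm (show (⟨a.val + 1, by omega⟩ : Fin (N + 1)) < ⟨b.val, by omega⟩ by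
          simp [Fin.lt_def, hl])).le
    exact h1lt.trans_le h2le
end

section
/- For every nonnegative integers m ≤ n, there exists an order-preserving Z_2-map from Q_m to Q_n; consequently Xind(Q_n) ≤ n. Moreover Xind(Q_n) = n, i.e., there is no order-preserving Z_2-map from Q_n to Q_m when m < n. -/
theorem QElem.le_def {n : ℕ} (p q : QElem n) : p ≤ q ↔ p = q ∨ |p.1| < |q.1| := Iff.rfl

/-- Key lemma: a Z2-map preserves distinctness of levels. -/
theorem key {n m : ℕ} {f : QElem n → QElem m} (hf : IsZ2Map (QNeg n) (QNeg m) f)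
    {p q : QElem n} (h : |(f p).1| = |(f q).1|) : |p.1| = |q.1| := by
  obtain ⟨mono, equiv⟩ := hf
  by_contra hne
  -- wlog: |p| < |q|
  have main : ∀ p q : QElem n, |p.1| < |q.1| → |(f p).1| = |(f q).1| → False := by
    intro p q hlt habs
    have h1 : f p ≤ f q := mono (Or.inr hlt)
    have h2 : f (QNeg n p) ≤ f q := mono (Or.inr (by simpa [QNeg, abs_neg] using hlt))
    have e1 : f p = f q := by
      rcases h1 with h | h
      · exact h
      · exact absurd h (by rw [habs]; exact lt_irrefl _)
    have e2 : f (QNeg n p) = f q := by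
      rcases h2 with h | h
      · exact h
      · rw [equiv] at h
        exact absurd h (by simp [QNeg, abs_neg, habs])
    rw [equiv, e1] at e2
    have : -(f q).1 = (f q).1 := congrArg Subtype.val e2
    have := (f q).2.1
    omega
  rcases lt_trichotomy |p.1| |q.1| with h' | h' | h'
  · exact main p q h' h
  · exact hne h'
  · exact main q p h' h.symm

def eQ (n : ℕ) (k : Fin (n + 1)) : QElem n :=
  ⟨(k : ℕ) + 1, by positivity, by
    rw [abs_of_pos (by positivity)]
    exact_mod_cast Nat.succ_le_of_lt k.2⟩

theorem not_exists_map {n m : ℕ} (hmn : m < n) :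
    ¬ ∃ f : QElem n → QElem m, IsZ2Map (QNeg n) (QNeg m) f := by
  rintro ⟨f, hf⟩
  have hL : ∀ k : Fin (n + 1), (f (eQ n k)).1.natAbs - 1 < m + 1 := by
    intro k
    have h1 : 1 ≤ (f (eQ n k)).1.natAbs := Int.natAbs_pos.mpr (f (eQ n k)).2.1
    have h2 : ((f (eQ n k)).1.natAbs : ℤ) ≤ (m : ℤ) + 1 := by
      rw [← Int.abs_eq_natAbs]; exact (f (eQ n k)).2.2
    omega
  set L : Fin (n + 1) → Fin (m + 1) := fun k => ⟨(f (eQ n k)).1.natAbs - 1, hL k⟩ with hLdef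
  have hinj : Function.Injective L := by
    intro k1 k2 hk
    have h1 : 1 ≤ (f (eQ n k1)).1.natAbs := Int.natAbs_pos.mpr (f (eQ n k1)).2.1
    have h2 : 1 ≤ (f (eQ n k2)).1.natAbs := Int.natAbs_pos.mpr (f (eQ n k2)).2.1
    have hv : (f (eQ n k1)).1.natAbs - 1 = (f (eQ n k2)).1.natAbs - 1 := congrArg Fin.val hk
    have habs : |(f (eQ n k1)).1| = |(f (eQ n k2)).1| := by
      rw [Int.abs_eq_natAbs, Int.abs_eq_natAbs]
      exact_mod_cast (by omega : (f (eQ n k1)).1.natAbs = (f (eQ n k2)).1.natAbs)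
    have := key hf habs
    simp only [eQ] at this
    have : ((k1 : ℕ) : ℤ) + 1 = ((k2 : ℕ) : ℤ) + 1 := by
      rwa [abs_of_pos (by positivity), abs_of_pos (by positivity)] at this
    exact Fin.ext (by exact_mod_cast (by omega : ((k1:ℕ):ℤ) = (k2:ℕ)))
  have := Fintype.card_le_of_injective L hinj
  simp at this
  omega

theorem exists_map {m n : ℕ} (hmn : m ≤ n) :
    ∃ f : QElem m → QElem n, IsZ2Map (QNeg m) (QNeg n) f := by
  refine ⟨fun p => ⟨p.1, p.2.1, p.2.2.trans (by exact_mod_cast by omega)⟩, ?_, ?_⟩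
  · intro p q hpq
    rcases hpq with rfl | h
    · exact Or.inl rfl
    · exact Or.inr h
  · intro p; rfl

/-- For nonnegative integers `m ≤ n` there is an order-preserving `Z₂`-map from
`Q m` to `Q n`, so `Xind (Q n) ≤ n`; moreover `Xind (Q n) = n`, i.e. there is no
order-preserving `Z₂`-map from `Q n` to `Q m` when `m < n`. -/
theorem XindZ_Q (n : ℕ) :
    (∀ m : ℕ, m ≤ n → ∃ f : QElem m → QElem n, IsZ2Map (QNeg m) (QNeg n) f) ∧
    XindZ (QElem n) (QNeg n) = n ∧
    (∀ m : ℕ, m < n → ¬ ∃ f : QElem n → QElem m, IsZ2Map (QNeg n) (QNeg m) f) := by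
  refine ⟨fun m hm => exists_map hm, ?_, fun m hm => not_exists_map hm⟩
  have hne : Nonempty (QElem n) := ⟨⟨1, one_ne_zero, by norm_num⟩⟩
  rw [XindZ, if_pos hne]
  have hmem : n ∈ {k : ℕ | ∃ f : QElem n → QElem k, IsZ2Map (QNeg n) (QNeg k) f} :=
    exists_map le_rfl
  have h1 : sInf {k : ℕ | ∃ f : QElem n → QElem k, IsZ2Map (QNeg n) (QNeg k) f} ≤ n :=
    Nat.sInf_le hmem
  have h2 : sInf {k : ℕ | ∃ f : QElem n → QElem k, IsZ2Map (QNeg n) (QNeg k) f} ∈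
      {k : ℕ | ∃ f : QElem n → QElem k, IsZ2Map (QNeg n) (QNeg k) f} :=
    Nat.sInf_mem ⟨n, hmem⟩
  have h3 : ¬ sInf {k : ℕ | ∃ f : QElem n → QElem k, IsZ2Map (QNeg n) (QNeg k) f} < n := by
    intro hc
    exact not_exists_map hc h2
  omega
end

section
/- Let G be a graph with a proper coloring c using colors in a linearly ordered set. Define φ on Hom(K_2, G) as follows: for (X, Y) in Hom(K_2, G), let n(X,Y) = |c(X)| + |c(Y)| (the total number of colors appearing on X plus colors appearing on Y), and set φ(X, Y) = +n(X,Y) if (c(X), c(Y)) is lexicographically ordered in a fixed total order on pairs of color sets refining cardinality of c(X), and −n(X,Y) otherwise. Then for every proper coloring one obtains χ(G) ≥ Xind(Hom(K_2, G)) + 2; equivalently, the number of colors of any proper coloring of a graph G with at least one edge is at least Xind(Hom(K_2, G)) + 2. -/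
/-- The Hom complex `Hom(K₂, G)`: pairs `(X, Y)` of nonempty disjoint vertex sets such that
`G[X, Y]` is complete bipartite, ordered by componentwise inclusion. -/
def HomK2 {V : Type*} (G : SimpleGraph V) : Type _ :=
  {XY : Set V × Set V // XY.1.Nonempty ∧ XY.2.Nonempty ∧ Disjoint XY.1 XY.2 ∧
    ∀ a ∈ XY.1, ∀ b ∈ XY.2, G.Adj a b}

instance {V : Type*} (G : SimpleGraph V) : PartialOrder (HomK2 G) :=
  Subtype.partialOrder _

/-- The involution `(X, Y) ↦ (Y, X)` of the Hom complex. -/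
def HomK2Swap {V : Type*} (G : SimpleGraph V) : HomK2 G → HomK2 G :=
  fun p => ⟨(p.1.2, p.1.1), p.2.2.1, p.2.1, p.2.2.2.1.symm,
    fun b hb a ha => (p.2.2.2.2 a ha b hb).symm⟩


/-!
Colour each pair `(X, Y)` of `Hom(K₂, G)` by the colour sets `A = c(X)` and `B = c(Y)`, which
are nonempty and disjoint. The value `|A| + |B| - 1` lies in `1, …, m - 1`, strictly increases
along a strict inclusion of colour-set pairs, and is symmetric in `A` and `B`; giving it the sign
`+` exactly when the smallest colour of `A ∪ B` lies in `A` makes it antisymmetric. This is an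
order-preserving `Z₂`-map `Hom(K₂, G) → Q (m - 2)`.
-/

lemma Set.ncard_add_ncard_le_card {α : Type*} [Finite α] {A B : Set α} (hd : Disjoint A B) :
    A.ncard + B.ncard ≤ Nat.card α :=
  Set.ncard_union_eq hd ▸ Set.ncard_le_card _

section ColorSets

variable {α : Type*} [LinearOrder α]

def StartsBefore (A B : Set α) : Prop := ∃ a ∈ A, ∀ b ∈ B, a < b

lemma StartsBefore.not_swap {A B : Set α} (h : StartsBefore A B) : ¬ StartsBefore B A := by
  rintro ⟨b, hb, hba⟩
  obtain ⟨a, ha, hab⟩ := h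
  exact lt_asymm (hab b hb) (hba a ha)

lemma startsBefore_or_swap [Finite α] {A B : Set α} (hA : A.Nonempty) (hd : Disjoint A B) :
    StartsBefore A B ∨ StartsBefore B A := by
  obtain ⟨x, hx, hmin⟩ :=
    Set.exists_min_image (A ∪ B) id (Set.toFinite _) (hA.mono Set.subset_union_left)
  have hlt {S T : Set α} (hST : Disjoint S T) (hxS : x ∈ S) (hT : T ⊆ A ∪ B) :
      StartsBefore S T :=
    ⟨x, hxS, fun y hy => (hmin y (hT hy)).lt_of_ne fun hxy : x = y =>
      hST.notMem_of_mem_left hxS (hxy ▸ hy)⟩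
  rcases hx with hxA | hxB
  · exact .inl (hlt hd hxA Set.subset_union_right)
  · exact .inr (hlt hd.symm hxB Set.subset_union_left)

open Classical in
noncomputable def signedColorCount (A B : Set α) : ℤ :=
  (if StartsBefore A B then 1 else -1) * ((A.ncard + B.ncard - 1 : ℕ) : ℤ)

lemma abs_signedColorCount (A B : Set α) :
    |signedColorCount A B| = ((A.ncard + B.ncard - 1 : ℕ) : ℤ) := by
  unfold signedColorCount
  split_ifs <;> simp

lemma signedColorCount_swap [Finite α] {A B : Set α} (hA : A.Nonempty) (hd : Disjoint A B) :
    signedColorCount B A = -signedColorCount A B := by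
  unfold signedColorCount
  rw [add_comm B.ncard]
  rcases startsBefore_or_swap hA hd with h | h
  · simp [h, h.not_swap]
  · simp [h, h.not_swap]

lemma signedColorCount_eq_or_abs_lt [Finite α] {A B A' B' : Set α} (hA : A.Nonempty)
    (hAA' : A ⊆ A') (hBB' : B ⊆ B') :
    signedColorCount A B = signedColorCount A' B' ∨
      |signedColorCount A B| < |signedColorCount A' B'| := by
  have hcA := Set.ncard_le_ncard hAA'
  have hcB := Set.ncard_le_ncard hBB'
  rcases (add_le_add hcA hcB).eq_or_lt with heq | hlt
  · left
    rw [Set.eq_of_subset_of_ncard_le hAA' (by omega), Set.eq_of_subset_of_ncard_le hBB' (by omega)]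
  · right
    have := (Set.ncard_pos (Set.toFinite _)).mpr hA
    rw [abs_signedColorCount, abs_signedColorCount]
    omega

end ColorSets

lemma XindZ_le_of_isZ2Map {P : Type*} [PartialOrder P] [Nonempty P] {νP : P → P} {n : ℕ}
    {f : P → QElem n} (hf : IsZ2Map νP (QNeg n) f) : XindZ P νP ≤ n := by
  rw [XindZ, if_pos ‹_›]
  exact_mod_cast Nat.sInf_le (⟨f, hf⟩ : ∃ f : P → QElem n, IsZ2Map νP (QNeg n) f)

namespace HomK2

variable {V : Type*} {G : SimpleGraph V}

def ofAdj {a b : V} (hab : G.Adj a b) : HomK2 G :=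
  ⟨({a}, {b}), Set.singleton_nonempty a, Set.singleton_nonempty b,
    Set.disjoint_singleton.mpr hab.ne, by simpa using hab⟩

variable {m : ℕ} (C : G.Coloring (Fin m))

lemma disjoint_image_coloring (p : HomK2 G) : Disjoint (C '' p.1.1) (C '' p.1.2) := by
  rw [Set.disjoint_left]
  rintro _ ⟨x, hx, rfl⟩ ⟨y, hy, hxy⟩
  exact C.valid (p.2.2.2.2 x hx y hy) hxy.symm

lemma two_le_ncard_add_ncard_image (p : HomK2 G) :
    2 ≤ (C '' p.1.1).ncard + (C '' p.1.2).ncard := by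
  have hX := (Set.ncard_pos (Set.toFinite _)).mpr (p.2.1.image C)
  have hY := (Set.ncard_pos (Set.toFinite _)).mpr (p.2.2.1.image C)
  omega

noncomputable def coloringMap (p : HomK2 G) : QElem (m - 2) :=
  ⟨signedColorCount (C '' p.1.1) (C '' p.1.2), by
    have h2 := two_le_ncard_add_ncard_image C p
    have hm := Nat.card_fin m ▸ Set.ncard_add_ncard_le_card (disjoint_image_coloring C p)
    have habs := abs_signedColorCount (C '' p.1.1) (C '' p.1.2)
    constructor
    · rw [← abs_ne_zero, habs]; omega
    · rw [habs]; omega⟩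

lemma isZ2Map_coloringMap : IsZ2Map (HomK2Swap G) (QNeg (m - 2)) (coloringMap C) := by
  refine ⟨fun p q hpq => ?_, fun p => Subtype.ext ?_⟩
  · exact (signedColorCount_eq_or_abs_lt (p.2.1.image C) (Set.image_mono hpq.1)
      (Set.image_mono hpq.2)).imp Subtype.ext id
  · exact signedColorCount_swap (p.2.1.image C) (disjoint_image_coloring C p)

end HomK2

theorem chromatic_ge_Xind_add_two_general {V : Type*} (G : SimpleGraph V)
    {a b : V} (hab : G.Adj a b) (m : ℕ) (C : G.Coloring (Fin m)) :
    XindZ (HomK2 G) (HomK2Swap G) + 2 ≤ (m : ℤ) := by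
  have : Nonempty (HomK2 G) := ⟨.ofAdj hab⟩
  have hXind := XindZ_le_of_isZ2Map (HomK2.isZ2Map_coloringMap C)
  have hm : 2 ≤ m := by
    have := Fin.val_ne_iff.mpr (C.valid hab)
    have := (C a).isLt
    have := (C b).isLt
    omega
  omega

/-- For every graph `G` with at least one edge, the number of colors of any
proper coloring of `G` is at least `Xind(Hom(K₂, G)) + 2`; in particular
`χ(G) ≥ Xind(Hom(K₂, G)) + 2`. -/
theorem chromatic_ge_Xind_add_two {V : Type*} [Fintype V] (G : SimpleGraph V)
    {a b : V} (hab : G.Adj a b) (m : ℕ) (C : G.Coloring (Fin m)) :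
    XindZ (HomK2 G) (HomK2Swap G) + 2 ≤ (m : ℤ) :=
  chromatic_ge_Xind_add_two_general G hab m C
end
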